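/- arXiv:0805.0020 — 6 statements merged into one kernel-verified Lean document; each statement's English description precedes it below -/
import Mathlib

section
/- For every bounded measurable set B ⊆ ℂ, the gravity potential Π_B is continuously differentiable on all of ℂ (viewed as ℝ²), and for every ζ ∈ ℂ its gradient is given by ∇Π_B(ζ) = (1/(2π)) ∫_B (ζ − z)/|ζ − z|² dA(z), where the integrand is viewed as a vector in ℝ². -/
/-!
For `ε ≠ 0` the kernel `log (‖w‖² + ε²) / 2` is smooth, with gradient `w / (‖w‖² + ε²)` bounded
by `1 / (2|ε|)`, so the regularised potential of a bounded set may be differentiated under the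
integral sign. As `ε → 0` the regularised potentials converge pointwise to the potential
(dominated convergence: `log ‖·‖` is locally integrable), and the regularised fields converge
uniformly: in the plane the difference of the two kernels has norm `ε² / (‖w‖ (‖w‖² + ε²))`,
which is integrable over the whole plane with integral tending to `0`. A uniform limit of
derivatives is the derivative of the limit, and it is continuous as a uniform limit of
continuous fields.
-/

open MeasureTheory

noncomputable def gravPotential (B : Set ℂ) (ζ : ℂ) : ℝ :=
  (1 / (2 * Real.pi)) * ∫ z in B, Real.log ‖z - ζ‖

open Metric Filter Topology Set InnerProductSpace Module

theorem Real.abs_log_le_two_mul_rpow_neg_half_add {t : ℝ} (ht : 0 ≤ t) :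
    |Real.log t| ≤ 2 * t ^ (-(1 / 2) : ℝ) + t := by
  rcases ht.eq_or_lt with rfl | ht
  · simp
  rcases le_total t 1 with h1 | h1
  · have h := Real.abs_log_mul_self_rpow_lt t (1 / 2) ht h1 (by norm_num)
    rw [abs_mul, Real.abs_rpow_of_nonneg ht.le, abs_of_pos ht] at h
    have hlog : |Real.log t| < 2 / t ^ (1 / 2 : ℝ) := by
      rw [lt_div_iff₀ (Real.rpow_pos_of_pos ht _)]
      norm_num at h
      linarith
    rw [Real.rpow_neg ht.le, ← div_eq_mul_inv]
    linarith
  · rw [abs_of_nonneg (Real.log_nonneg h1)]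
    linarith [Real.log_le_sub_one_of_pos ht, Real.rpow_nonneg ht.le (-(1 / 2) : ℝ)]

section LogKernel

variable {E : Type*} [NormedAddCommGroup E]

noncomputable def logKernel (ε : ℝ) (w : E) : ℝ := Real.log (‖w‖ ^ 2 + ε ^ 2) / 2

theorem norm_sq_add_sq_pos {ε : ℝ} (hε : ε ≠ 0) (w : E) : 0 < ‖w‖ ^ 2 + ε ^ 2 :=
  add_pos_of_nonneg_of_pos (sq_nonneg _) (pow_pos (abs_pos.2 hε) 2 |>.trans_eq (sq_abs ε))

theorem logKernel_zero (w : E) : logKernel 0 w = Real.log ‖w‖ := by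
  simp [logKernel, Real.log_pow]

theorem measurable_logKernel [MeasurableSpace E] [BorelSpace E] (ε : ℝ) :
    Measurable (logKernel ε : E → ℝ) := by
  unfold logKernel
  fun_prop

theorem continuous_logKernel {ε : ℝ} (hε : ε ≠ 0) : Continuous (logKernel ε : E → ℝ) :=
  ((continuous_norm.pow 2).add continuous_const |>.log
    fun w => (norm_sq_add_sq_pos hε w).ne').div_const 2

theorem tendsto_logKernel {w : E} (hw : w ≠ 0) :
    Tendsto (logKernel · w) (𝓝 0) (𝓝 (logKernel 0 w)) := by
  have : ‖w‖ ^ 2 + (0 : ℝ) ^ 2 ≠ 0 := by simpa using hw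
  exact ((continuousAt_const.add (continuous_pow 2).continuousAt).log this).div_const 2 |>.tendsto

theorem abs_logKernel_le {ε : ℝ} (hε : |ε| ≤ 1) {w : E} (hw : w ≠ 0) :
    |logKernel ε w| ≤ |Real.log ‖w‖| + Real.log (‖w‖ ^ 2 + 1) / 2 := by
  have hw' : 0 < ‖w‖ := norm_pos_iff.2 hw
  have hε1 : ε ^ 2 ≤ 1 := by nlinarith [sq_abs ε, abs_nonneg ε]
  have hlow : Real.log ‖w‖ ≤ logKernel ε w := by
    rw [← logKernel_zero, logKernel, logKernel]
    gcongr ?_ / 2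
    exact Real.log_le_log (by simpa using pow_pos hw' 2) (by simp [sq_nonneg])
  have hup : logKernel ε w ≤ Real.log (‖w‖ ^ 2 + 1) / 2 := by
    rw [logKernel]
    gcongr
  have hnn : 0 ≤ Real.log (‖w‖ ^ 2 + 1) := Real.log_nonneg (by nlinarith)
  rw [abs_le]
  constructor <;> linarith [neg_abs_le (Real.log ‖w‖), le_abs_self (Real.log ‖w‖)]

variable [NormedSpace ℝ E]

/- At `ε = 0` this is `w / ‖w‖²`, the gradient of `log ‖w‖` away from `0`, with the junk
value `0` at `w = 0`. -/
noncomputable def logKernelGrad (ε : ℝ) (w : E) : E := (‖w‖ ^ 2 + ε ^ 2)⁻¹ • w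

theorem measurable_logKernelGrad [MeasurableSpace E] [BorelSpace E] [SecondCountableTopology E]
    (ε : ℝ) : Measurable (logKernelGrad ε : E → E) := by
  unfold logKernelGrad
  fun_prop

theorem continuous_logKernelGrad {ε : ℝ} (hε : ε ≠ 0) : Continuous (logKernelGrad ε : E → E) :=
  ((continuous_norm.pow 2).add continuous_const |>.inv₀
    fun w => (norm_sq_add_sq_pos hε w).ne').smul continuous_id

theorem tendsto_logKernelGrad (w : E) :
    Tendsto (logKernelGrad · w) (𝓝 0) (𝓝 (logKernelGrad 0 w)) := by
  rcases eq_or_ne w 0 with rfl | hw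
  · simp [logKernelGrad]
  have : ‖w‖ ^ 2 + (0 : ℝ) ^ 2 ≠ 0 := by simpa using hw
  exact ((continuousAt_const.add (continuous_pow 2).continuousAt).inv₀ this).smul
    continuousAt_const |>.tendsto

theorem norm_logKernelGrad (ε : ℝ) (w : E) :
    ‖logKernelGrad ε w‖ = ‖w‖ / (‖w‖ ^ 2 + ε ^ 2) := by
  rw [logKernelGrad, norm_smul, Real.norm_of_nonneg (by positivity), inv_mul_eq_div]

theorem norm_logKernelGrad_le_inv_norm (ε : ℝ) (w : E) : ‖logKernelGrad ε w‖ ≤ ‖w‖⁻¹ := by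
  rcases eq_or_ne w 0 with rfl | hw
  · simp [logKernelGrad]
  rw [norm_logKernelGrad, div_le_iff₀ (by positivity), inv_mul_eq_div,
    le_div_iff₀ (by positivity)]
  nlinarith [sq_nonneg ε, sq_nonneg ‖w‖]

theorem norm_logKernelGrad_le {ε : ℝ} (hε : ε ≠ 0) (w : E) :
    ‖logKernelGrad ε w‖ ≤ (2 * |ε|)⁻¹ := by
  rw [norm_logKernelGrad, div_le_iff₀ (norm_sq_add_sq_pos hε w), ← div_eq_inv_mul,
    le_div_iff₀ (by positivity)]
  nlinarith [sq_nonneg (‖w‖ - |ε|), sq_abs ε]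

theorem norm_logKernelGrad_sub_logKernelGrad_zero (ε : ℝ) (w : E) :
    ‖logKernelGrad ε w - logKernelGrad 0 w‖ = ε ^ 2 / (‖w‖ * (‖w‖ ^ 2 + ε ^ 2)) := by
  rcases eq_or_ne w 0 with rfl | hw
  · simp [logKernelGrad]
  have hw' : 0 < ‖w‖ := norm_pos_iff.2 hw
  have hcoef : (‖w‖ ^ 2 + ε ^ 2)⁻¹ - (‖w‖ ^ 2 + 0 ^ 2)⁻¹ =
      -(ε ^ 2 / (‖w‖ ^ 2 * (‖w‖ ^ 2 + ε ^ 2))) := by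
    field_simp
    ring
  rw [logKernelGrad, logKernelGrad, ← sub_smul, hcoef, norm_smul, norm_neg,
    Real.norm_of_nonneg (by positivity)]
  field_simp

theorem norm_logKernelGrad_sub_logKernelGrad_zero_le {ε : ℝ} (hε : |ε| ≤ 1) (w : E) :
    ‖logKernelGrad ε w - logKernelGrad 0 w‖ ≤ (‖w‖ * (‖w‖ ^ 2 + 1))⁻¹ := by
  rcases eq_or_ne w 0 with rfl | hw
  · simp [logKernelGrad]
  have hw' : 0 < ‖w‖ := norm_pos_iff.2 hw
  have hε1 : ε ^ 2 ≤ 1 := by nlinarith [sq_abs ε, abs_nonneg ε]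
  rw [norm_logKernelGrad_sub_logKernelGrad_zero, ← one_div,
    div_le_div_iff₀ (by positivity) (by positivity)]
  nlinarith [mul_nonneg (mul_nonneg hw'.le (sq_nonneg ‖w‖)) (sub_nonneg.2 hε1)]

end LogKernel

noncomputable def logPotential {E : Type*} [NormedAddCommGroup E] [MeasurableSpace E]
    (μ : Measure E) (B : Set E) (ε : ℝ) (ζ : E) : ℝ :=
  ∫ z in B, logKernel ε (ζ - z) ∂μ

noncomputable def logField {E : Type*} [NormedAddCommGroup E] [NormedSpace ℝ E]
    [MeasurableSpace E] (μ : Measure E) (B : Set E) (ε : ℝ) (ζ : E) : E :=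
  ∫ z in B, logKernelGrad ε (ζ - z) ∂μ

section HaarMeasure

variable {E : Type*} [NormedAddCommGroup E] [NormedSpace ℝ E] [FiniteDimensional ℝ E]
  [MeasurableSpace E] [BorelSpace E] {μ : Measure E} [μ.IsAddHaarMeasure]

theorem locallyIntegrable_inv_norm (hE : 1 < finrank ℝ E) :
    LocallyIntegrable (fun x : E => ‖x‖⁻¹) μ :=
  locallyIntegrable_of_norm_le_rpow (C := 1) (α := 1) hE.le (by exact_mod_cast hE)
    (.of_forall fun x => by simp [Real.rpow_neg_one]) (by fun_prop)

theorem locallyIntegrable_log_norm (hE : 1 ≤ finrank ℝ E) :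
    LocallyIntegrable (fun x : E => Real.log ‖x‖) μ := by
  have hα : 1 / 2 < (finrank ℝ E : ℝ) := by
    have : (1 : ℝ) ≤ finrank ℝ E := by exact_mod_cast hE
    linarith
  have hdom : LocallyIntegrable (fun x : E => 2 * ‖x‖ ^ (-(1 / 2) : ℝ) + ‖x‖) μ :=
    (locallyIntegrable_of_norm_le_rpow (C := 2) hE hα
      (.of_forall fun x => by simp [abs_of_nonneg (Real.rpow_nonneg (norm_nonneg x) _)])
      (by fun_prop : Measurable _).aestronglyMeasurable).add continuous_norm.locallyIntegrable
  refine hdom.mono (by fun_prop : Measurable _).aestronglyMeasurable (.of_forall fun x => ?_)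
  rw [Real.norm_eq_abs, Real.norm_of_nonneg (by positivity)]
  exact Real.abs_log_le_two_mul_rpow_neg_half_add (norm_nonneg x)

theorem MeasureTheory.LocallyIntegrable.integrableOn_comp_sub_left {F : Type*}
    [NormedAddCommGroup F] {f : E → F} (hf : LocallyIntegrable f μ) {B : Set E}
    (hB : Bornology.IsBounded B) (ζ : E) : IntegrableOn (fun z => f (ζ - z)) B μ := by
  have hK : IsCompact ((ζ - ·) '' closure B) :=
    hB.isCompact_closure.image (continuous_sub_left ζ)
  exact ((μ.measurePreserving_sub_left ζ).integrableOn_image (measurableEmbedding_subLeft ζ)).1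
    (hf.integrableOn_isCompact hK) |>.mono_set subset_closure

/- In polar coordinates the integrand becomes `(1 + t²)⁻¹`. -/
theorem integrable_inv_norm_mul_norm_sq_add_one (hE : finrank ℝ E = 2) :
    Integrable (fun w : E => (‖w‖ * (‖w‖ ^ 2 + 1))⁻¹) μ := by
  have : Nontrivial E := Module.nontrivial_of_finrank_eq_succ hE
  refine (integrable_fun_norm_addHaar μ (f := fun t => (t * (t ^ 2 + 1))⁻¹)).2 ?_
  refine integrable_inv_one_add_sq.integrableOn.congr_fun (fun t (ht : 0 < t) => ?_)
    measurableSet_Ioi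
  simp only [hE, smul_eq_mul]
  field_simp
  ring

theorem integrable_logKernelGrad_sub_logKernelGrad_zero (hE : finrank ℝ E = 2) {ε : ℝ}
    (hε : |ε| ≤ 1) : Integrable (fun w => logKernelGrad ε w - logKernelGrad 0 w) μ :=
  (integrable_inv_norm_mul_norm_sq_add_one hE).mono'
    ((measurable_logKernelGrad ε).sub (measurable_logKernelGrad 0)).aestronglyMeasurable
    (.of_forall (norm_logKernelGrad_sub_logKernelGrad_zero_le hε))

theorem tendsto_integral_norm_logKernelGrad_sub_logKernelGrad_zero (hE : finrank ℝ E = 2) :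
    Tendsto (fun ε => ∫ w, ‖logKernelGrad ε w - logKernelGrad 0 w‖ ∂μ) (𝓝 0) (𝓝 0) := by
  have hdom : ∀ᶠ ε in 𝓝 (0 : ℝ), ∀ᵐ w ∂μ,
      ‖‖logKernelGrad ε w - logKernelGrad 0 w‖‖ ≤ (‖w‖ * (‖w‖ ^ 2 + 1))⁻¹ := by
    filter_upwards [closedBall_mem_nhds (0 : ℝ) one_pos] with ε hε
    refine .of_forall fun w => ?_
    rw [norm_norm]
    exact norm_logKernelGrad_sub_logKernelGrad_zero_le (by simpa using hε) w
  simpa using tendsto_integral_filter_of_dominated_convergence _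
    (.of_forall fun ε => ((measurable_logKernelGrad ε).sub
      (measurable_logKernelGrad 0)).norm.aestronglyMeasurable) hdom
    (integrable_inv_norm_mul_norm_sq_add_one hE)
    (.of_forall fun w => tendsto_iff_norm_sub_tendsto_zero.1 (tendsto_logKernelGrad w))

variable {B : Set E}

theorem continuous_logField (hB : Bornology.IsBounded B) {ε : ℝ} (hε : ε ≠ 0) :
    Continuous (logField μ B ε) := by
  have : IsFiniteMeasure (μ.restrict B) := isFiniteMeasure_restrict.2 hB.measure_lt_top.ne
  exact continuous_of_dominated (bound := fun _ => (2 * |ε|)⁻¹)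
    (fun ζ => ((continuous_logKernelGrad hε).comp (continuous_sub_left ζ)).aestronglyMeasurable)
    (fun ζ => .of_forall fun z => norm_logKernelGrad_le hε _) (integrable_const _)
    (.of_forall fun z => (continuous_logKernelGrad hε).comp (continuous_sub_right z))

theorem tendsto_logPotential (hE : 1 ≤ finrank ℝ E) (hB : Bornology.IsBounded B) (ζ : E) :
    Tendsto (logPotential μ B · ζ) (𝓝 0) (𝓝 (logPotential μ B 0 ζ)) := by
  have : Nontrivial E := Module.nontrivial_of_finrank_pos hE
  have hne : ∀ᵐ z ∂μ.restrict B, ζ - z ≠ 0 := by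
    refine ae_restrict_of_ae (ae_iff.2 ?_)
    simp [sub_eq_zero]
  have hcont : Continuous fun w : E => Real.log (‖w‖ ^ 2 + 1) / 2 :=
    (((continuous_norm.pow 2).add continuous_const).log
      fun w => (by positivity : ‖w‖ ^ 2 + 1 ≠ 0)).div_const 2
  have hbound : IntegrableOn
      (fun z => |Real.log ‖ζ - z‖| + Real.log (‖ζ - z‖ ^ 2 + 1) / 2) B μ :=
    ((locallyIntegrable_log_norm hE).integrableOn_comp_sub_left hB ζ).abs.add
      (hcont.locallyIntegrable.integrableOn_comp_sub_left hB ζ)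
  have hdom : ∀ᶠ ε in 𝓝 (0 : ℝ), ∀ᵐ z ∂μ.restrict B,
      ‖logKernel ε (ζ - z)‖ ≤ |Real.log ‖ζ - z‖| + Real.log (‖ζ - z‖ ^ 2 + 1) / 2 := by
    filter_upwards [closedBall_mem_nhds (0 : ℝ) one_pos] with ε hε
    refine hne.mono fun z hz => ?_
    rw [Real.norm_eq_abs]
    exact abs_logKernel_le (by simpa using hε) hz
  exact tendsto_integral_filter_of_dominated_convergence _
    (.of_forall fun ε => ((measurable_logKernel ε).comp
      (measurable_const.sub measurable_id)).aestronglyMeasurable)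
    hdom hbound (hne.mono fun z hz => tendsto_logKernel hz)

theorem integrableOn_logKernelGrad_comp_sub (hE : 1 < finrank ℝ E) (hB : Bornology.IsBounded B)
    (ε : ℝ) (ζ : E) : IntegrableOn (fun z => logKernelGrad ε (ζ - z)) B μ :=
  ((locallyIntegrable_inv_norm hE).mono (measurable_logKernelGrad ε).aestronglyMeasurable
    (.of_forall fun w => by simpa using norm_logKernelGrad_le_inv_norm ε w)
    ).integrableOn_comp_sub_left hB ζ

theorem norm_logField_sub_logField_zero_le (hE : finrank ℝ E = 2) (hB : Bornology.IsBounded B)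
    {ε : ℝ} (hε : |ε| ≤ 1) (ζ : E) :
    ‖logField μ B ε ζ - logField μ B 0 ζ‖ ≤
      ∫ w, ‖logKernelGrad ε w - logKernelGrad 0 w‖ ∂μ :=
  calc ‖logField μ B ε ζ - logField μ B 0 ζ‖
      = ‖∫ z in B, (logKernelGrad ε (ζ - z) - logKernelGrad 0 (ζ - z)) ∂μ‖ := by
        rw [logField, logField,
          integral_sub (integrableOn_logKernelGrad_comp_sub (by omega) hB ε ζ)
            (integrableOn_logKernelGrad_comp_sub (by omega) hB 0 ζ)]
    _ ≤ ∫ z in B, ‖logKernelGrad ε (ζ - z) - logKernelGrad 0 (ζ - z)‖ ∂μ :=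
        norm_integral_le_integral_norm _
    _ ≤ ∫ z, ‖logKernelGrad ε (ζ - z) - logKernelGrad 0 (ζ - z)‖ ∂μ :=
        setIntegral_le_integral
          ((integrable_logKernelGrad_sub_logKernelGrad_zero hE hε).norm.comp_sub_left ζ)
          (.of_forall fun _ => norm_nonneg _)
    _ = ∫ w, ‖logKernelGrad ε w - logKernelGrad 0 w‖ ∂μ :=
        integral_sub_left_eq_self (fun w => ‖logKernelGrad ε w - logKernelGrad 0 w‖) μ ζ

theorem tendstoUniformly_logField (hE : finrank ℝ E = 2) (hB : Bornology.IsBounded B) :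
    TendstoUniformly (logField μ B) (logField μ B 0) (𝓝 0) := by
  rw [Metric.tendstoUniformly_iff]
  intro δ hδ
  have hsmall := (tendsto_integral_norm_logKernelGrad_sub_logKernelGrad_zero (μ := μ) hE).eventually
    (gt_mem_nhds hδ)
  filter_upwards [hsmall, closedBall_mem_nhds (0 : ℝ) one_pos] with ε hsmall hε ζ
  rw [dist_comm, dist_eq_norm]
  exact (norm_logField_sub_logField_zero_le hE hB (by simpa using hε) ζ).trans_lt hsmall

theorem continuous_logField_zero (hE : finrank ℝ E = 2) (hB : Bornology.IsBounded B) :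
    Continuous (logField μ B 0) := by
  have hcont : ∀ᶠ ε in 𝓝[≠] (0 : ℝ), Continuous (logField μ B ε) :=
    eventually_mem_nhdsWithin.mono fun _ hε => continuous_logField hB hε
  exact (tendstoUniformly_logField hE hB).continuous
    (hcont.frequently.filter_mono nhdsWithin_le_nhds)

end HaarMeasure

section Gradient

variable {E : Type*} [NormedAddCommGroup E] [InnerProductSpace ℝ E]

theorem hasFDerivAt_logKernel [CompleteSpace E] {ε : ℝ} (hε : ε ≠ 0) (w : E) :
    HasFDerivAt (logKernel ε) (toDual ℝ E (logKernelGrad ε w)) w := by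
  have h := (((hasFDerivAt_id w).norm_sq.add_const (ε ^ 2)).log
    (norm_sq_add_sq_pos hε w).ne').mul_const (2⁻¹ : ℝ)
  refine (h.congr_fderiv ?_).congr_of_eventuallyEq (.of_forall fun x => ?_)
  · ext v
    simp [logKernelGrad]
    ring
  · simp [logKernel, div_eq_mul_inv]

variable [FiniteDimensional ℝ E] [MeasurableSpace E] [BorelSpace E] {μ : Measure E}
  [μ.IsAddHaarMeasure] {B : Set E}

theorem hasFDerivAt_logPotential (hB : Bornology.IsBounded B) {ε : ℝ} (hε : ε ≠ 0) (ζ : E) :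
    HasFDerivAt (logPotential μ B ε) (toDual ℝ E (logField μ B ε ζ)) ζ := by
  have : IsFiniteMeasure (μ.restrict B) := isFiniteMeasure_restrict.2 hB.measure_lt_top.ne
  have key := hasFDerivAt_integral_of_dominated_of_fderiv_le (μ := μ.restrict B) (x₀ := ζ)
    (F := fun x z => logKernel ε (x - z))
    (F' := fun x z => toDual ℝ E (logKernelGrad ε (x - z)))
    (bound := fun _ => (2 * |ε|)⁻¹) univ_mem
    (.of_forall fun x =>
      ((continuous_logKernel hε).comp (continuous_sub_left x)).aestronglyMeasurable)
    ((continuous_logKernel hε).locallyIntegrable.integrableOn_comp_sub_left hB ζ)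
    ((toDual ℝ E).continuous.comp ((continuous_logKernelGrad hε).comp
      (continuous_sub_left ζ))).aestronglyMeasurable
    (.of_forall fun z x _ => ?_) (integrable_const _) (.of_forall fun z x _ => ?_)
  · rw [logField, ← LinearIsometryEquiv.coe_toLinearIsometry, ← LinearIsometry.integral_comp_comm]
    exact key
  · rw [LinearIsometryEquiv.norm_map]
    exact norm_logKernelGrad_le hε _
  · simpa [Function.comp_def] using
      (hasFDerivAt_logKernel hε (x - z)).comp x ((hasFDerivAt_id x).sub_const z)

theorem hasGradientAt_logPotential_zero (hE : finrank ℝ E = 2) (hB : Bornology.IsBounded B)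
    (ζ : E) : HasGradientAt (logPotential μ B 0) (logField μ B 0 ζ) ζ := by
  have hunif : TendstoUniformly (logField μ B) (logField μ B 0) (𝓝[≠] 0) := fun u hu =>
    (tendstoUniformly_logField hE hB u hu).filter_mono nhdsWithin_le_nhds
  have hunif_dual : TendstoUniformly (fun ε x => toDual ℝ E (logField μ B ε x))
      (fun x => toDual ℝ E (logField μ B 0 x)) (𝓝[≠] 0) :=
    (toDual ℝ E).lipschitz.uniformContinuous.comp_tendstoUniformly hunif
  have hderiv : ∀ᶠ ε in 𝓝[≠] (0 : ℝ), ∀ x : E,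
      HasFDerivAt (logPotential μ B ε) (toDual ℝ E (logField μ B ε x)) x :=
    eventually_mem_nhdsWithin.mono fun _ hε => hasFDerivAt_logPotential hB hε
  rw [hasGradientAt_iff_hasFDerivAt]
  refine hasFDerivAt_of_tendstoUniformlyOnFilter
    (hunif_dual.tendstoUniformlyOnFilter.mono_right le_top) ?_
    (.of_forall fun y => (tendsto_logPotential (by omega) hB y).mono_left nhdsWithin_le_nhds)
  exact (hderiv.prod_inl (𝓝 ζ)).mono fun n hn => hn n.2

end Gradient

theorem gravPotential_contDiff_and_gradient_general
    (B : Set ℂ) (hBb : Bornology.IsBounded B) :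
    ContDiff ℝ 1 (gravPotential B) ∧
      ∀ ζ : ℂ,
        gradient (gravPotential B) ζ =
          (1 / (2 * Real.pi)) • ∫ z in B, (ζ - z) / ((‖ζ - z‖ : ℝ) : ℂ) ^ 2 := by
  have hE := Complex.finrank_real_complex
  have hpot : gravPotential B = fun ζ => 1 / (2 * Real.pi) * logPotential volume B 0 ζ := by
    ext ζ
    simp [gravPotential, logPotential, logKernel_zero, norm_sub_rev]
  have hgrad (ζ : ℂ) : HasGradientAt (gravPotential B)
      ((1 / (2 * Real.pi)) • logField volume B 0 ζ) ζ := by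
    rw [hpot, hasGradientAt_iff_hasFDerivAt, map_smul]
    exact (hasGradientAt_iff_hasFDerivAt.1 (hasGradientAt_logPotential_zero hE hBb ζ)).const_mul _
  refine ⟨contDiff_one_iff_hasFDerivAt.2
    ⟨_, ?_, fun ζ => hasGradientAt_iff_hasFDerivAt.1 (hgrad ζ)⟩, fun ζ => ?_⟩
  · exact (toDual ℝ ℂ).continuous.comp ((continuous_logField_zero hE hBb).const_smul
      (1 / (2 * Real.pi)))
  · rw [(hgrad ζ).gradient, logField]
    congr 1
    refine integral_congr_ae (.of_forall fun z => ?_)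
    simp [logKernelGrad, div_eq_inv_mul, Complex.real_smul]

/-- For every bounded measurable set `B ⊆ ℂ`, the gravity potential `Π_B` is continuously
differentiable on all of `ℂ` (viewed as `ℝ²`), and for every `ζ` its gradient (as a vector
in `ℝ² ≅ ℂ`) is `∇Π_B(ζ) = (1/(2π)) ∫_B (ζ − z)/|ζ − z|² dA(z)`. -/
theorem gravPotential_contDiff_and_gradient
    (B : Set ℂ) (hBm : MeasurableSet B) (hBb : Bornology.IsBounded B) :
    ContDiff ℝ 1 (gravPotential B) ∧
      ∀ ζ : ℂ,
        gradient (gravPotential B) ζ =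
          (1 / (2 * Real.pi)) • ∫ z in B, (ζ - z) / ((‖ζ - z‖ : ℝ) : ℂ) ^ 2 :=
  gravPotential_contDiff_and_gradient_general B hBb
end

section
/- Let G ⊆ ℂ be a bounded measurable set of area S. Then for every point ζ ∈ ℂ, the gradient of the gravity potential satisfies |∇Π_G(ζ)| ≤ √(S/π). -/
/-!
The potential is `√(S / π)`-Lipschitz, which bounds the norm of its derivative.
For `a, b > 0` one has `|log a - log b| ≤ |a - b| (a⁻¹ + b⁻¹) / 2` (this is `u ≤ sinh u` for
`u = log (b / a)`), so `|Π_G(ζ₁) - Π_G(ζ₂)|` is at most `‖ζ₁ - ζ₂‖ / (2π)` times the average of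
`∫_G ‖z - ζᵢ‖⁻¹`. Among sets of area `S` this integral is largest for the disc of radius
`r = √(S / π)` centred at `ζᵢ`, where it equals `2πr`: by the layer-cake formula it suffices that
`G` meets the superlevel set `{‖z - w‖⁻¹ > t}`, the disc of radius `t⁻¹`, in area at most
`min (S, π t⁻²)`.
-/

open MeasureTheory

open Set Real
open scoped ENNReal

namespace Real

lemma abs_log_le_self_add_inv {x : ℝ} (hx : 0 ≤ x) : |log x| ≤ x + x⁻¹ := by
  rcases hx.eq_or_lt with rfl | hx
  · simp
  have hinv := log_le_self (inv_nonneg.2 hx.le)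
  rw [log_inv] at hinv
  rw [abs_le]
  constructor <;> linarith [log_le_self hx.le, inv_nonneg.2 hx.le]

lemma abs_log_sub_log_le {a b : ℝ} (ha : 0 < a) (hb : 0 < b) :
    |log a - log b| ≤ |a - b| * (a⁻¹ + b⁻¹) / 2 := by
  wlog hab : a ≤ b generalizing a b
  · rw [abs_sub_comm, abs_sub_comm a, add_comm]
    exact this hb ha (le_of_not_ge hab)
  have hsinh := self_le_sinh_iff.2 (log_nonneg ((one_le_div ha).2 hab))
  rw [sinh_eq, exp_log (by positivity), exp_neg, exp_log (by positivity), log_div hb.ne' ha.ne']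
    at hsinh
  rw [abs_sub_comm (log a), abs_of_nonneg (sub_nonneg.2 (log_le_log ha hab)), abs_sub_comm a,
    abs_of_nonneg (sub_nonneg.2 hab)]
  calc log b - log a ≤ (b / a - (b / a)⁻¹) / 2 := hsinh
    _ = (b - a) * (a⁻¹ + b⁻¹) / 2 := by field_simp; ring

end Real

lemma abs_log_norm_sub_sub_log_norm_sub_le {E : Type*} [NormedAddCommGroup E] {z ζ₁ ζ₂ : E}
    (h₁ : z ≠ ζ₁) (h₂ : z ≠ ζ₂) :
    |log ‖z - ζ₁‖ - log ‖z - ζ₂‖| ≤ ‖ζ₁ - ζ₂‖ * (‖z - ζ₁‖⁻¹ + ‖z - ζ₂‖⁻¹) / 2 := by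
  refine (abs_log_sub_log_le (norm_pos_iff.2 (sub_ne_zero.2 h₁))
    (norm_pos_iff.2 (sub_ne_zero.2 h₂))).trans ?_
  gcongr
  calc |‖z - ζ₁‖ - ‖z - ζ₂‖| ≤ ‖(z - ζ₁) - (z - ζ₂)‖ := abs_norm_sub_norm_le _ _
    _ = ‖ζ₁ - ζ₂‖ := by rw [sub_sub_sub_cancel_left, norm_sub_rev]

lemma lintegral_Ioi_rpow_of_lt {a c : ℝ} (ha : a < -1) (hc : 0 < c) :
    ∫⁻ t in Ioi c, ENNReal.ofReal (t ^ a) = ENNReal.ofReal (-c ^ (a + 1) / (a + 1)) := by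
  rw [← integral_Ioi_rpow_of_lt ha hc, ofReal_integral_eq_lintegral_ofReal
    (integrableOn_Ioi_rpow_of_lt ha hc)]
  exact ae_restrict_of_forall_mem measurableSet_Ioi fun t ht => rpow_nonneg (hc.trans ht).le _

lemma volume_setOf_lt_inv_norm_sub_le (w : ℂ) {t : ℝ} (ht : 0 < t) :
    volume {z : ℂ | t < ‖z - w‖⁻¹} ≤ ENNReal.ofReal (π * t ^ (-2 : ℝ)) := by
  have hball : {z : ℂ | t < ‖z - w‖⁻¹} ⊆ Metric.ball w t⁻¹ := fun z hz => by
    have hpos : 0 < ‖z - w‖ := inv_pos.1 (ht.trans hz)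
    rwa [Metric.mem_ball, dist_eq_norm, ← lt_inv_comm₀ ht hpos]
  refine (measure_mono hball).trans_eq ?_
  rw [Complex.volume_ball, ← ENNReal.ofReal_pow (inv_nonneg.2 ht.le), ← ENNReal.ofReal_coe_nnreal,
    NNReal.coe_real_pi, ← ENNReal.ofReal_mul (by positivity), rpow_neg ht.le, Real.rpow_two,
    inv_pow, mul_comm]

section

variable {G : Set ℂ} {S : ℝ}

lemma setLIntegral_inv_norm_sub_le_of_pos (w : ℂ) {r : ℝ} (hr : 0 < r) :
    ∫⁻ z in G, ENNReal.ofReal ‖z - w‖⁻¹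
      ≤ volume G * ENNReal.ofReal r⁻¹ + ENNReal.ofReal (π * r) := by
  have hf : AEMeasurable (fun z : ℂ => ‖z - w‖⁻¹) (volume.restrict G) := by fun_prop
  rw [lintegral_eq_lintegral_meas_lt _ (ae_of_all _ fun z => inv_nonneg.2 (norm_nonneg _)) hf,
    ← Ioc_union_Ioi_eq_Ioi (inv_pos.2 hr).le,
    lintegral_union measurableSet_Ioi (Ioc_disjoint_Ioi le_rfl)]
  gcongr ?_ + ?_
  · calc ∫⁻ t in Ioc 0 r⁻¹, volume.restrict G {z | t < ‖z - w‖⁻¹}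
        ≤ ∫⁻ t in Ioc 0 r⁻¹, volume G :=
          lintegral_mono fun t => (measure_mono (subset_univ _)).trans_eq
            (Measure.restrict_apply_univ G)
      _ = volume G * ENNReal.ofReal r⁻¹ := by rw [setLIntegral_const, Real.volume_Ioc, sub_zero]
  · calc ∫⁻ t in Ioi r⁻¹, volume.restrict G {z | t < ‖z - w‖⁻¹}
        ≤ ∫⁻ t in Ioi r⁻¹, ENNReal.ofReal π * ENNReal.ofReal (t ^ (-2 : ℝ)) := by
          refine setLIntegral_mono (by fun_prop) fun t ht => ?_
          rw [← ENNReal.ofReal_mul pi_pos.le]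
          exact (Measure.restrict_apply_le _ _).trans
            (volume_setOf_lt_inv_norm_sub_le w ((inv_pos.2 hr).trans ht))
      _ = ENNReal.ofReal (π * r) := by
          rw [lintegral_const_mul _ (by fun_prop), lintegral_Ioi_rpow_of_lt (by norm_num)
            (inv_pos.2 hr), ← ENNReal.ofReal_mul pi_pos.le]
          norm_num [Real.rpow_neg_one]

lemma setLIntegral_inv_norm_sub_le (hG : volume G ≤ ENNReal.ofReal S) (w : ℂ) :
    ∫⁻ z in G, ENNReal.ofReal ‖z - w‖⁻¹ ≤ ENNReal.ofReal (2 * π * √(S / π)) := by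
  rcases le_or_gt S 0 with hS | hS
  · have hG0 : volume G = 0 := nonpos_iff_eq_zero.1 (hG.trans_eq (ENNReal.ofReal_eq_zero.2 hS))
    simp [Measure.restrict_eq_zero.2 hG0]
  set r := √(S / π)
  have hr : 0 < r := sqrt_pos.2 (div_pos hS pi_pos)
  have hSr : S = π * r ^ 2 := by rw [sq_sqrt (div_pos hS pi_pos).le]; field_simp
  calc ∫⁻ z in G, ENNReal.ofReal ‖z - w‖⁻¹
      ≤ volume G * ENNReal.ofReal r⁻¹ + ENNReal.ofReal (π * r) :=
        setLIntegral_inv_norm_sub_le_of_pos w hr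
    _ ≤ ENNReal.ofReal S * ENNReal.ofReal r⁻¹ + ENNReal.ofReal (π * r) := by gcongr
    _ = ENNReal.ofReal (2 * π * r) := by
        rw [← ENNReal.ofReal_mul hS.le, ← ENNReal.ofReal_add (by positivity) (by positivity), hSr]
        congr 1
        field_simp
        ring

lemma integrableOn_inv_norm_sub (hG : volume G ≠ ∞) (w : ℂ) :
    IntegrableOn (fun z => ‖z - w‖⁻¹) G := by
  have hnonneg : 0 ≤ᵐ[volume.restrict G] fun z : ℂ => ‖z - w‖⁻¹ :=
    ae_of_all _ fun z => inv_nonneg.2 (norm_nonneg _)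
  refine ⟨by fun_prop, (hasFiniteIntegral_iff_ofReal hnonneg).2 ?_⟩
  exact (setLIntegral_inv_norm_sub_le (ENNReal.ofReal_toReal hG).ge w).trans_lt
    ENNReal.ofReal_lt_top

lemma setIntegral_inv_norm_sub_le (hG : volume G ≤ ENNReal.ofReal S) (w : ℂ) :
    ∫ z in G, ‖z - w‖⁻¹ ≤ 2 * π * √(S / π) := by
  rw [integral_eq_lintegral_of_nonneg_ae (ae_of_all _ fun z => inv_nonneg.2 (norm_nonneg _))
    (by fun_prop)]
  exact ENNReal.toReal_le_of_le_ofReal (by positivity) (setLIntegral_inv_norm_sub_le hG w)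

lemma integrableOn_log_norm_sub (hG : Bornology.IsBounded G) (ζ : ℂ) :
    IntegrableOn (fun z => log ‖z - ζ‖) G := by
  have hnorm : IntegrableOn (fun z => ‖z - ζ‖) G :=
    ((by fun_prop : Continuous fun z : ℂ => ‖z - ζ‖).continuousOn.integrableOn_compact
      hG.isCompact_closure).mono_set subset_closure
  refine (hnorm.add (integrableOn_inv_norm_sub hG.measure_lt_top.ne ζ)).mono'
    (measurable_log.comp (by fun_prop)).aestronglyMeasurable (ae_of_all _ fun z => ?_)
  rw [norm_eq_abs]
  exact abs_log_le_self_add_inv (norm_nonneg (z - ζ))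

lemma setIntegral_abs_log_norm_sub_sub_le (hG : volume G ≤ ENNReal.ofReal S) (ζ₁ ζ₂ : ℂ) :
    ∫ z in G, |log ‖z - ζ₁‖ - log ‖z - ζ₂‖| ≤ 2 * π * √(S / π) * ‖ζ₁ - ζ₂‖ := by
  have hfin : volume G ≠ ∞ := ne_top_of_le_ne_top ENNReal.ofReal_ne_top hG
  have hi₁ := integrableOn_inv_norm_sub hfin ζ₁
  have hi₂ := integrableOn_inv_norm_sub hfin ζ₂
  calc ∫ z in G, |log ‖z - ζ₁‖ - log ‖z - ζ₂‖|
      ≤ ∫ z in G, ‖ζ₁ - ζ₂‖ * (‖z - ζ₁‖⁻¹ + ‖z - ζ₂‖⁻¹) / 2 := by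
        refine integral_mono_of_nonneg (ae_of_all _ fun _ => abs_nonneg _)
          (((hi₁.add hi₂).const_mul _).div_const 2) ?_
        filter_upwards [ae_restrict_of_ae (volume.ae_ne ζ₁), ae_restrict_of_ae (volume.ae_ne ζ₂)]
          with z h₁ h₂ using abs_log_norm_sub_sub_log_norm_sub_le h₁ h₂
    _ = ‖ζ₁ - ζ₂‖ * ((∫ z in G, ‖z - ζ₁‖⁻¹) + ∫ z in G, ‖z - ζ₂‖⁻¹) / 2 := by
        rw [integral_div, integral_const_mul, integral_add hi₁ hi₂]
    _ ≤ ‖ζ₁ - ζ₂‖ * (2 * π * √(S / π) + 2 * π * √(S / π)) / 2 := by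
        gcongr <;> exact setIntegral_inv_norm_sub_le hG _
    _ = 2 * π * √(S / π) * ‖ζ₁ - ζ₂‖ := by ring

theorem lipschitzWith_gravPotential (hGb : Bornology.IsBounded G)
    (hG : volume G ≤ ENNReal.ofReal S) :
    LipschitzWith (√(S / π)).toNNReal (gravPotential G) := by
  refine LipschitzWith.of_dist_le_mul fun ζ₁ ζ₂ => ?_
  rw [coe_toNNReal _ (sqrt_nonneg _), dist_eq_norm ζ₁ ζ₂, dist_eq, gravPotential, gravPotential,
    ← mul_sub, ← integral_sub (integrableOn_log_norm_sub hGb ζ₁)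
      (integrableOn_log_norm_sub hGb ζ₂), abs_mul, abs_of_pos (by positivity)]
  calc 1 / (2 * π) * |∫ z in G, (log ‖z - ζ₁‖ - log ‖z - ζ₂‖)|
      ≤ 1 / (2 * π) * ∫ z in G, |log ‖z - ζ₁‖ - log ‖z - ζ₂‖| := by
        gcongr
        exact abs_integral_le_integral_abs
    _ ≤ 1 / (2 * π) * (2 * π * √(S / π) * ‖ζ₁ - ζ₂‖) := by
        gcongr
        exact setIntegral_abs_log_norm_sub_sub_le hG ζ₁ ζ₂
    _ = √(S / π) * ‖ζ₁ - ζ₂‖ := by field_simp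

end

theorem norm_gradient_gravPotential_le_general
    (G : Set ℂ) (hGb : Bornology.IsBounded G)
    (S : ℝ) (hS : volume G = ENNReal.ofReal S) (ζ : ℂ) :
    ‖gradient (gravPotential G) ζ‖ ≤ Real.sqrt (S / Real.pi) := by
  rw [gradient, LinearIsometryEquiv.norm_map]
  simpa only [Real.coe_toNNReal _ (Real.sqrt_nonneg _)] using
    norm_fderiv_le_of_lipschitz ℝ (lipschitzWith_gravPotential hGb hS.le) (x₀ := ζ)

/-- Let `G ⊆ ℂ` be a bounded measurable set of area `S`. Then for every point `ζ ∈ ℂ`,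
the gradient of the gravity potential satisfies `|∇Π_G(ζ)| ≤ √(S/π)`. -/
theorem norm_gradient_gravPotential_le
    (G : Set ℂ) (hGm : MeasurableSet G) (hGb : Bornology.IsBounded G)
    (S : ℝ) (hS : volume G = ENNReal.ofReal S) (ζ : ℂ) :
    ‖gradient (gravPotential G) ζ‖ ≤ Real.sqrt (S / Real.pi) :=
  norm_gradient_gravPotential_le_general G hGb S hS ζ
end

section
/- Let G ⊆ ℂ be a measurable set of finite positive area S, let ζ ∈ ℂ, and let K be the open disk centered at ζ of area S (i.e. of radius √(S/π)). Then ∫_G |ζ − z|⁻¹ dA(z) ≤ ∫_K |ζ − z|⁻¹ dA(z) = 2√(πS). -/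
/-!
Write `K` for the disk of radius `r`. Since `G` and `K` have the same area, so do `G \ K` and
`K \ G`. The integrand is at most `1 / r` off `K` and at least `1 / r` on `K`, hence
`∫_{G \ K} ≤ |G \ K| / r = |K \ G| / r ≤ ∫_{K \ G}`, and adding `∫_{G ∩ K}` gives the inequality.
The integral over the disk is `∫₀^r ρ⁻¹ · 2πρ dρ = 2πr` in polar coordinates.
-/

open MeasureTheory Measure Set Metric

theorem setLIntegral_le_of_measure_eq {α : Type*} [MeasurableSpace α] {μ : Measure α}
    {f : α → ENNReal} {G K : Set α} {c : ENNReal} (hG : MeasurableSet G) (hK : MeasurableSet K)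
    (hμ : μ G = μ K) (hfin : μ (G ∩ K) ≠ ⊤) (h_out : ∀ᵐ z ∂μ.restrict (G \ K), f z ≤ c)
    (h_in : ∀ᵐ z ∂μ.restrict (K \ G), c ≤ f z) :
    ∫⁻ z in G, f z ∂μ ≤ ∫⁻ z in K, f z ∂μ :=
  calc ∫⁻ z in G, f z ∂μ = ∫⁻ z in G ∩ K, f z ∂μ + ∫⁻ z in G \ K, f z ∂μ :=
        (lintegral_inter_add_sdiff f G hK).symm
    _ ≤ ∫⁻ z in G ∩ K, f z ∂μ + c * μ (G \ K) := by
        gcongr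
        exact (lintegral_mono_ae h_out).trans_eq (setLIntegral_const _ c)
    _ = ∫⁻ z in K ∩ G, f z ∂μ + c * μ (K \ G) := by
        rw [inter_comm, measure_sdiff_symm hG.nullMeasurableSet hK.nullMeasurableSet hμ hfin]
    _ ≤ ∫⁻ z in K ∩ G, f z ∂μ + ∫⁻ z in K \ G, f z ∂μ := by
        gcongr
        exact (setLIntegral_const _ c).symm.trans_le (lintegral_mono_ae h_in)
    _ = ∫⁻ z in K, f z ∂μ := lintegral_inter_add_sdiff f K hG

theorem lintegral_fun_norm_addHaar {E : Type*} [NormedAddCommGroup E] [NormedSpace ℝ E]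
    [MeasurableSpace E] [BorelSpace E] [FiniteDimensional ℝ E] [Nontrivial E]
    (μ : Measure E) [μ.IsAddHaarMeasure] {f : ℝ → ENNReal} (hf : Measurable f) :
    ∫⁻ x, f ‖x‖ ∂μ = Module.finrank ℝ E * μ (ball 0 1) *
      ∫⁻ y in Ioi (0 : ℝ), ENNReal.ofReal (y ^ (Module.finrank ℝ E - 1)) * f y :=
  calc
    ∫⁻ x, f ‖x‖ ∂μ = ∫⁻ x : ({(0)}ᶜ : Set E), f ‖x.1‖ ∂(μ.comap (↑)) := by
      rw [lintegral_subtype_comap (measurableSet_singleton _).compl (fun x => f ‖x‖),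
        restrict_compl_singleton]
    _ = ∫⁻ x, f x.2 ∂μ.toSphere.prod (volumeIoiPow (Module.finrank ℝ E - 1)) := by
      simpa using μ.measurePreserving_homeomorphUnitSphereProd.lintegral_comp_emb
        (Homeomorph.measurableEmbedding _) (f ∘ Subtype.val ∘ Prod.snd)
    _ = μ.toSphere univ * ∫⁻ y, f y ∂volumeIoiPow (Module.finrank ℝ E - 1) := by
      simpa using lintegral_prod_mul (μ := μ.toSphere) (f := fun _ => (1 : ENNReal))
        (g := f ∘ Subtype.val) aemeasurable_const (hf.comp measurable_subtype_coe).aemeasurable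
    _ = _ := by
      rw [toSphere_apply_univ, volumeIoiPow, lintegral_withDensity_eq_lintegral_mul _
        (by fun_prop) (g := fun y : Ioi (0 : ℝ) => f y) (hf.comp measurable_subtype_coe)]
      exact congrArg _ (lintegral_subtype_comap measurableSet_Ioi
        (fun y => ENNReal.ofReal (y ^ _) * f y))

theorem setLIntegral_inv_norm_sub_ball (ζ : ℂ) (r : ℝ) :
    ∫⁻ z in ball ζ r, ENNReal.ofReal ‖ζ - z‖⁻¹ = ENNReal.ofReal (2 * Real.pi * r) := by
  have h_indicator : (ball ζ r).indicator (fun z => ENNReal.ofReal ‖ζ - z‖⁻¹) =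
      fun z => (Iio r).indicator (fun t => ENNReal.ofReal t⁻¹) ‖z - ζ‖ := by
    ext z
    simp [indicator, dist_eq_norm, norm_sub_rev]
  have h_radial : ∀ t ∈ Ioi (0 : ℝ),
      ENNReal.ofReal (t ^ 1) * (Iio r).indicator (fun t => ENNReal.ofReal t⁻¹) t =
        (Iio r).indicator (fun _ => 1) t := by
    intro t (ht : 0 < t)
    by_cases htr : t < r
    · simp [htr, ← ENNReal.ofReal_mul ht.le, ht.ne']
    · simp [htr]
  rw [← lintegral_indicator measurableSet_ball, h_indicator,
    lintegral_sub_right_eq_self (fun z => (Iio r).indicator (fun t => ENNReal.ofReal t⁻¹) ‖z‖),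
    lintegral_fun_norm_addHaar _ ((measurable_inv.ennreal_ofReal).indicator measurableSet_Iio),
    Complex.finrank_real_complex, setLIntegral_congr_fun measurableSet_Ioi h_radial,
    setLIntegral_indicator measurableSet_Iio, Iio_inter_Ioi, setLIntegral_one,
    Complex.volume_ball, Real.volume_Ioo, ENNReal.ofReal_mul (by positivity),
    ENNReal.ofReal_mul zero_le_two, ← NNReal.coe_real_pi, ENNReal.ofReal_coe_nnreal]
  simp

theorem setLIntegral_inv_norm_sub_le_ball {E : Type*} [NormedAddCommGroup E] [MeasurableSpace E]
    [OpensMeasurableSpace E] {μ : Measure E} [NullSingletonClass μ] {G : Set E}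
    (hG : MeasurableSet G) {ζ : E} {r : ℝ} (hr : 0 < r) (hμ : μ G = μ (ball ζ r))
    (hfin : μ (ball ζ r) ≠ ⊤) :
    ∫⁻ z in G, ENNReal.ofReal ‖ζ - z‖⁻¹ ∂μ ≤ ∫⁻ z in ball ζ r, ENNReal.ofReal ‖ζ - z‖⁻¹ ∂μ := by
  have h_out : ∀ᵐ z ∂μ.restrict (G \ ball ζ r), ENNReal.ofReal ‖ζ - z‖⁻¹ ≤ ENNReal.ofReal r⁻¹ :=
    ae_restrict_of_forall_mem (hG.diff measurableSet_ball) fun z hz =>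
      ENNReal.ofReal_le_ofReal <| inv_anti₀ hr <| by
        rw [← dist_eq_norm]
        exact not_lt.1 (mem_ball'.not.1 hz.2)
  have h_in : ∀ᵐ z ∂μ.restrict (ball ζ r \ G), ENNReal.ofReal r⁻¹ ≤ ENNReal.ofReal ‖ζ - z‖⁻¹ := by
    filter_upwards [ae_restrict_of_ae (μ.ae_ne ζ),
      ae_restrict_mem (measurableSet_ball.diff hG)] with z hz hz_mem
    refine ENNReal.ofReal_le_ofReal (inv_anti₀ (norm_pos_iff.2 (sub_ne_zero.2 hz.symm)) ?_)
    rw [← dist_eq_norm]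
    exact (mem_ball'.1 hz_mem.1).le
  exact setLIntegral_le_of_measure_eq hG measurableSet_ball hμ
    (measure_ne_top_of_subset inter_subset_right hfin) h_out h_in

/-- Let `G ⊆ ℂ` be a measurable set of finite positive area `S`, let `ζ ∈ ℂ`, and let `K` be
the open disk centered at `ζ` of area `S` (i.e. of radius `√(S/π)`). Then
`∫_G |ζ − z|⁻¹ dA(z) ≤ ∫_K |ζ − z|⁻¹ dA(z) = 2√(πS)`. -/
theorem lintegral_inv_dist_le_ball
    (G : Set ℂ) (hGm : MeasurableSet G) (S : ℝ) (hS : 0 < S)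
    (hSG : volume G = ENNReal.ofReal S) (ζ : ℂ) :
    (∫⁻ z in G, ENNReal.ofReal (‖ζ - z‖)⁻¹) ≤
        (∫⁻ z in Metric.ball ζ (Real.sqrt (S / Real.pi)),
          ENNReal.ofReal (‖ζ - z‖)⁻¹) ∧
      (∫⁻ z in Metric.ball ζ (Real.sqrt (S / Real.pi)),
          ENNReal.ofReal (‖ζ - z‖)⁻¹) =
        ENNReal.ofReal (2 * Real.sqrt (Real.pi * S)) := by
  set r := Real.sqrt (S / Real.pi) with hr_def
  have hr : 0 < r := Real.sqrt_pos.mpr (by positivity)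
  have h_area : volume G = volume (ball ζ r) := by
    rw [Complex.volume_ball, hSG, ← ENNReal.ofReal_pow hr.le, hr_def,
      Real.sq_sqrt (by positivity), ← ENNReal.ofReal_coe_nnreal, NNReal.coe_real_pi,
      ← ENNReal.ofReal_mul (by positivity), div_mul_cancel₀ _ Real.pi_ne_zero]
  have h_length : 2 * Real.pi * r = 2 * Real.sqrt (Real.pi * S) := by
    have h_sqrt_pi : 0 < Real.sqrt Real.pi := Real.sqrt_pos.2 Real.pi_pos
    rw [hr_def, Real.sqrt_mul Real.pi_pos.le, Real.sqrt_div hS.le]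
    field_simp
    rw [Real.sq_sqrt Real.pi_pos.le]
  exact ⟨setLIntegral_inv_norm_sub_le_ball hGm hr h_area measure_ball_lt_top.ne,
    by rw [setLIntegral_inv_norm_sub_ball, h_length]⟩
end

section
/- For every integer n ≥ 1 and every θ ∈ ℝ, the imaginary part of the holomorphic (nonnegative-degree) part of (ζ + ζ⁻¹)^{2n−1} at ζ = e^{iθ} satisfies: Σ_{k=0}^{n−1} C(2n−1, k) · sin((2n−1−2k)θ) = 4^{n−1} · Q_{n−1}(cos²θ) · sin θ, where C(·,·) denotes the binomial coefficient. -/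
open Finset

/-- The polynomial `Q_m(u) = Σ_{k=0}^{m} ((2k)! / (4^k (k!)²)) u^{m−k}`. -/
noncomputable def Qpoly (m : ℕ) (u : ℝ) : ℝ :=
  ∑ k ∈ Finset.range (m + 1),
    ((Nat.factorial (2 * k) : ℝ) / (4 ^ k * (Nat.factorial k : ℝ) ^ 2)) * u ^ (m - k)

/-!
Write `S_N(m) = Σ_{k<m} C(N,k) sin((N−2k)θ)`. Since
`2 cos θ sin(aθ) = sin((a+1)θ) + sin((a−1)θ)`, Pascal's rule gives
`2 cos θ · S_N(m) = S_{N+1}(m+1) − C(N,m) sin((N+1−2m)θ)`. Applying this twice to the odd sum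
`S_{2m+1}(m+1)` yields `S_{2m+3}(m+2) = 4 cos²θ · S_{2m+1}(m+1) + C(2m+2,m+1) sin θ`, which is
the recurrence `Q_{m+1}(u) = u Q_m(u) + C(2m+2,m+1)/4^{m+1}` scaled by `4^{m+1} sin θ`.
-/

/-- Imaginary part of the first `m` terms of the binomial expansion of `(e^{iθ} + e^{−iθ})^N`. -/
noncomputable def binomSinSum (N m : ℕ) (θ : ℝ) : ℝ :=
  ∑ k ∈ range m, (N.choose k : ℝ) * Real.sin (((N : ℝ) - 2 * k) * θ)

lemma two_mul_cos_mul_sin_mul (θ a : ℝ) :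
    2 * Real.cos θ * Real.sin (a * θ) = Real.sin ((a + 1) * θ) + Real.sin ((a - 1) * θ) := by
  rw [add_mul, sub_mul, one_mul, Real.sin_add, Real.sin_sub]
  ring

lemma binomSinSum_succ (N m : ℕ) (θ : ℝ) :
    binomSinSum N (m + 1) θ =
      binomSinSum N m θ + N.choose m * Real.sin (((N : ℝ) - 2 * m) * θ) :=
  sum_range_succ _ _

lemma two_mul_cos_mul_binomSinSum (N m : ℕ) (θ : ℝ) :
    2 * Real.cos θ * binomSinSum N m θ =
      binomSinSum (N + 1) (m + 1) θ - N.choose m * Real.sin (((N : ℝ) + 1 - 2 * m) * θ) := by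
  induction m with
  | zero => simp [binomSinSum]
  | succ m ih =>
    rw [binomSinSum_succ N m, mul_add, ih, binomSinSum_succ (N + 1) (m + 1),
      Nat.choose_succ_succ', mul_left_comm, two_mul_cos_mul_sin_mul]
    push_cast
    ring_nf

lemma binomSinSum_odd_succ (m : ℕ) (θ : ℝ) :
    binomSinSum (2 * (m + 1) + 1) (m + 1 + 1) θ =
      4 * Real.cos θ ^ 2 * binomSinSum (2 * m + 1) (m + 1) θ +
        (m + 1).centralBinom * Real.sin θ := by
  have hodd := two_mul_cos_mul_binomSinSum (2 * m + 1) (m + 1) θ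
  have heven := two_mul_cos_mul_binomSinSum (2 * m + 1 + 1) (m + 1 + 1) θ
  have hzero : (((2 * m + 1 : ℕ) : ℝ) + 1 - 2 * ((m + 1 : ℕ) : ℝ)) * θ = 0 := by
    push_cast; ring
  have hneg : (((2 * m + 1 + 1 : ℕ) : ℝ) + 1 - 2 * ((m + 1 + 1 : ℕ) : ℝ)) * θ = -θ := by
    push_cast; ring
  have hlast : binomSinSum (2 * m + 1 + 1 + 1) (m + 1 + 1 + 1) θ =
      binomSinSum (2 * (m + 1) + 1) (m + 1 + 1) θ -
        (2 * m + 1 + 1 + 1).choose (m + 1 + 1) * Real.sin θ := by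
    rw [binomSinSum_succ,
      show (((2 * m + 1 + 1 + 1 : ℕ) : ℝ) - 2 * ((m + 1 + 1 : ℕ) : ℝ)) * θ = -θ by push_cast; ring,
      Real.sin_neg]
    ring_nf
  rw [hzero, Real.sin_zero, mul_zero, sub_zero] at hodd
  rw [hneg, Real.sin_neg, hlast, ← hodd, Nat.choose_succ_succ' (2 * m + 1 + 1)] at heven
  rw [Nat.centralBinom_eq_two_mul_choose]
  push_cast at heven ⊢
  linear_combination -heven

lemma factorial_div_eq_centralBinom_div (k : ℕ) :
    ((2 * k).factorial : ℝ) / (4 ^ k * (k.factorial : ℝ) ^ 2) = k.centralBinom / 4 ^ k := by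
  rw [Nat.centralBinom_eq_two_mul_choose, Nat.cast_choose ℝ (by omega : k ≤ 2 * k),
    show 2 * k - k = k by omega]
  field_simp

lemma Qpoly_succ (m : ℕ) (u : ℝ) :
    Qpoly (m + 1) u = u * Qpoly m u + (m + 1).centralBinom / 4 ^ (m + 1) := by
  rw [Qpoly, sum_range_succ, Qpoly, mul_sum, factorial_div_eq_centralBinom_div, Nat.sub_self,
    pow_zero, mul_one]
  congr 1
  refine sum_congr rfl fun k hk => ?_
  rw [Nat.sub_add_comm (mem_range_succ_iff.mp hk), pow_succ]
  ring

lemma binomSinSum_odd_eq_Qpoly (m : ℕ) (θ : ℝ) :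
    binomSinSum (2 * m + 1) (m + 1) θ = 4 ^ m * Qpoly m (Real.cos θ ^ 2) * Real.sin θ := by
  induction m with
  | zero => simp [binomSinSum, Qpoly]
  | succ m ih =>
    rw [binomSinSum_odd_succ, ih, Qpoly_succ]
    field_simp
    ring

/-- For every integer `n ≥ 1` and every `θ ∈ ℝ`, the imaginary part of the
nonnegative-degree (holomorphic) part of `(ζ + ζ⁻¹)^{2n−1}` at `ζ = e^{iθ}` satisfies
`Σ_{k=0}^{n−1} C(2n−1, k) sin((2n−1−2k)θ) = 4^{n−1} Q_{n−1}(cos²θ) sin θ`. -/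
theorem im_holPart_eq_Qpoly (n : ℕ) (hn : 1 ≤ n) (θ : ℝ) :
    ∑ k ∈ Finset.range n,
        (Nat.choose (2 * n - 1) k : ℝ) *
          Real.sin ((2 * (n : ℝ) - 1 - 2 * (k : ℝ)) * θ) =
      4 ^ (n - 1) * Qpoly (n - 1) (Real.cos θ ^ 2) * Real.sin θ := by
  obtain ⟨m, rfl⟩ : ∃ m, n = m + 1 := ⟨n - 1, by omega⟩
  rw [Nat.add_sub_cancel, show 2 * (m + 1) - 1 = 2 * m + 1 by omega,
    ← binomSinSum_odd_eq_Qpoly, binomSinSum]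
  refine sum_congr rfl fun k _ => ?_
  push_cast
  ring_nf
end

section
/- Let q > 0, 0 < b < 1, ε > 0, and let A : (0, ε) → (0, 1) be a function satisfying the implicit equation A(τ)·log A(τ) − A(τ) = 2q·τ·log b for all τ ∈ (0, ε), with A(τ) → 0 as τ → 0⁺. Then A(τ) ∼ 2q·τ·log(b) / log(τ) as τ → 0⁺, i.e. the ratio A(τ)·log(τ) / (2q·τ·log b) tends to 1 as τ → 0⁺. (This expresses the logarithmically slow rate of contraction of the smaller of two bubbles near its partial contraction time.) -/
open Filter Topology

/-!
Writing `L = log A(τ)`, the equation reads `A(τ) (1 - L) = c τ` with `c = -2q log b`, so taking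
logarithms gives `log τ = L + log (1 - L) - log c`, while the denominator `2qτ log b` equals
`A(τ) (L - 1)`. Hence the ratio is `(L + log (1 - L) - log c) / (L - 1)`, which tends to `1` as
`L → -∞` because `log (1 - L) = o(L)`; and `L → -∞` since `A(τ) → 0⁺`.
-/

lemma tendsto_log_add_const_div_atTop (c : ℝ) :
    Tendsto (fun u : ℝ => (Real.log u + c) / u) atTop (𝓝 0) := by
  have hlog : Tendsto (fun u : ℝ => Real.log u / u) atTop (𝓝 0) :=
    Real.isLittleO_log_id_atTop.tendsto_div_nhds_zero
  have hconst : Tendsto (fun u : ℝ => c / u) atTop (𝓝 0) :=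
    tendsto_const_nhds.div_atTop tendsto_id
  simpa only [add_div, add_zero] using hlog.add hconst

lemma tendsto_add_log_one_sub_sub_div_sub_one_atBot (C : ℝ) :
    Tendsto (fun L : ℝ => (L + Real.log (1 - L) - C) / (L - 1)) atBot (𝓝 1) := by
  have hu : Tendsto (fun L : ℝ => 1 - L) atBot atTop :=
    tendsto_atTop_add_const_left _ 1 tendsto_neg_atBot_atTop
  have h := ((tendsto_log_add_const_div_atTop (1 - C)).comp hu).const_sub 1
  rw [sub_zero] at h
  refine h.congr' ?_
  filter_upwards [eventually_lt_atBot 1] with L hL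
  have hL' : L - 1 ≠ 0 := by linarith
  have hL'' : 1 - L ≠ 0 := by linarith
  simp only [Function.comp]
  field_simp
  ring

lemma mul_log_div_eq_of_mul_log_sub_self_eq {x τ k : ℝ} (hx : x ≠ 0) (hlogx : Real.log x ≠ 1)
    (hτ : τ ≠ 0) (heq : x * Real.log x - x = k * τ) :
    x * Real.log τ / (k * τ) =
      (Real.log x + Real.log (1 - Real.log x) - Real.log (-k)) / (Real.log x - 1) := by
  have hsub : Real.log x - 1 ≠ 0 := sub_ne_zero.mpr hlogx
  have hprod : x * (1 - Real.log x) = -k * τ := by linear_combination -heq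
  have hk : -k ≠ 0 := by
    rintro hk
    rw [hk, zero_mul] at hprod
    exact mul_ne_zero hx (sub_ne_zero.mpr hlogx.symm) hprod
  have hlogτ : Real.log τ = Real.log x + Real.log (1 - Real.log x) - Real.log (-k) := by
    have h := congrArg Real.log hprod
    rw [Real.log_mul hx (sub_ne_zero.mpr hlogx.symm), Real.log_mul hk hτ] at h
    linarith
  rw [← heq, hlogτ]
  field_simp

theorem logarithmically_slow_contraction_general
    (q b ε : ℝ) (hε : 0 < ε)
    (A : ℝ → ℝ)
    (hA : ∀ τ ∈ Set.Ioo 0 ε, A τ ∈ Set.Ioo (0 : ℝ) 1)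
    (heq : ∀ τ ∈ Set.Ioo 0 ε,
      A τ * Real.log (A τ) - A τ = 2 * q * τ * Real.log b)
    (hlim : Tendsto A (𝓝[>] 0) (𝓝 0)) :
    Tendsto (fun τ => A τ * Real.log τ / (2 * q * τ * Real.log b))
      (𝓝[>] 0) (𝓝 1) := by
  have hmem : ∀ᶠ τ in 𝓝[>] (0 : ℝ), τ ∈ Set.Ioo 0 ε := Ioo_mem_nhdsGT hε
  have hApos : Tendsto A (𝓝[>] 0) (𝓝[>] 0) :=
    tendsto_nhdsWithin_of_tendsto_nhds_of_eventually_within A hlim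
      (hmem.mono fun τ hτ => (hA τ hτ).1)
  have hlogA : Tendsto (fun τ => Real.log (A τ)) (𝓝[>] 0) atBot :=
    Real.tendsto_log_nhdsGT_zero.comp hApos
  refine ((tendsto_add_log_one_sub_sub_div_sub_one_atBot
    (Real.log (-(2 * q * Real.log b)))).comp hlogA).congr' ?_
  filter_upwards [hmem] with τ hτ
  obtain ⟨hA0, hA1⟩ := hA τ hτ
  have hk : 2 * q * τ * Real.log b = 2 * q * Real.log b * τ := by ring
  rw [Function.comp_apply, hk]
  exact (mul_log_div_eq_of_mul_log_sub_self_eq hA0.ne' (by linarith [Real.log_neg hA0 hA1])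
    hτ.1.ne' (hk ▸ heq τ hτ)).symm

/-- Let `q > 0`, `0 < b < 1`, `ε > 0`, and let `A : (0,ε) → (0,1)` satisfy
`A(τ) log A(τ) − A(τ) = 2qτ log b` with `A(τ) → 0` as `τ → 0⁺`. Then
`A(τ) ∼ 2qτ log b / log τ` as `τ → 0⁺`, i.e. the ratio
`A(τ) log τ / (2qτ log b)` tends to `1`. (Logarithmically slow contraction of the
smaller bubble near its partial contraction time.) -/
theorem logarithmically_slow_contraction
    (q b ε : ℝ) (hq : 0 < q) (hb0 : 0 < b) (hb1 : b < 1) (hε : 0 < ε)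
    (A : ℝ → ℝ)
    (hA : ∀ τ ∈ Set.Ioo 0 ε, A τ ∈ Set.Ioo (0 : ℝ) 1)
    (heq : ∀ τ ∈ Set.Ioo 0 ε,
      A τ * Real.log (A τ) - A τ = 2 * q * τ * Real.log b)
    (hlim : Tendsto A (𝓝[>] 0) (𝓝 0)) :
    Tendsto (fun τ => A τ * Real.log τ / (2 * q * τ * Real.log b))
      (𝓝[>] 0) (𝓝 1) :=
  logarithmically_slow_contraction_general q b ε hε A hA heq hlim
end

section
/- Let β > 0. There exists A₀ > 0 such that for every A with 0 < A < A₀, the function f(ζ) = A·ζ⁻¹ + (A/(1 + 6βA²))·ζ − 2βA³·ζ³ is injective on the punctured open unit disk {ζ ∈ ℂ : 0 < |ζ| < 1}. (This f is the conformal map from the unit disk to the exterior of a bubble whose gravity potential near the contraction point is y²/2 + β·Re(z⁴)/4.) -/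
/-!
Dividing by `b = A/(1 + 6p)` with `p = βA²` turns `f` into `g(ζ) = (1 + 6p)/ζ + ζ - 2p(1 + 6p)ζ³`.
If `g(ζ₁) = g(ζ₂)` with `ζ₁ ≠ ζ₂`, then `w = ζ₁ζ₂` and `S = ζ₁² + ζ₁ζ₂ + ζ₂²` satisfy
`1 + 6p = w - 2p(1 + 6p) wS`. Taking real parts with the crude bound `|wS| ≤ 3` forces
`Re w ≥ 1 - 36p²`, so `w` lies within `9p` of `1`; then `Re (wS) ≥ Re w - 2 - 27p`, and feeding
this back gives `3 ≤ (1 + 6p)(1 + 27p)`, which fails for small `p`.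
-/

open Complex

noncomputable def normalizedMap (p : ℝ) (ζ : ℂ) : ℂ :=
  (1 + 6 * p) * ζ⁻¹ + ζ - 2 * p * (1 + 6 * p) * ζ ^ 3

lemma Complex.neg_norm_le_re (z : ℂ) : -‖z‖ ≤ z.re := (abs_le.mp (abs_re_le_norm z)).1

lemma Complex.norm_sub_one_sq_le {w : ℂ} (hw : ‖w‖ ≤ 1) : ‖w - 1‖ ^ 2 ≤ 2 - 2 * w.re := by
  have h : ‖w‖ ^ 2 ≤ 1 := pow_le_one₀ (norm_nonneg w) hw
  rw [Complex.sq_norm, Complex.normSq_apply] at h ⊢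
  simp only [sub_re, sub_im, one_re, one_im]
  nlinarith

section UnitDisk

variable {ζ₁ ζ₂ : ℂ}

lemma norm_mul_le_one (h₁ : ‖ζ₁‖ ≤ 1) (h₂ : ‖ζ₂‖ ≤ 1) : ‖ζ₁ * ζ₂‖ ≤ 1 := by
  rw [norm_mul]; exact mul_le_one₀ h₁ (norm_nonneg _) h₂

lemma norm_sq_add_mul_add_sq_le_three (h₁ : ‖ζ₁‖ ≤ 1) (h₂ : ‖ζ₂‖ ≤ 1) :
    ‖ζ₁ ^ 2 + ζ₁ * ζ₂ + ζ₂ ^ 2‖ ≤ 3 := by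
  have e₁ : ‖ζ₁ ^ 2‖ ≤ 1 := by rw [norm_pow]; exact pow_le_one₀ (norm_nonneg _) h₁
  have e₂ : ‖ζ₂ ^ 2‖ ≤ 1 := by rw [norm_pow]; exact pow_le_one₀ (norm_nonneg _) h₂
  calc ‖ζ₁ ^ 2 + ζ₁ * ζ₂ + ζ₂ ^ 2‖ ≤ ‖ζ₁ ^ 2‖ + ‖ζ₁ * ζ₂‖ + ‖ζ₂ ^ 2‖ := norm_add₃_le
    _ ≤ 3 := by linarith [norm_mul_le_one h₁ h₂]

lemma neg_three_le_re_mul_sq_add_mul_add_sq (h₁ : ‖ζ₁‖ ≤ 1) (h₂ : ‖ζ₂‖ ≤ 1) :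
    -3 ≤ (ζ₁ * ζ₂ * (ζ₁ ^ 2 + ζ₁ * ζ₂ + ζ₂ ^ 2)).re := by
  have hwS : ‖ζ₁ * ζ₂ * (ζ₁ ^ 2 + ζ₁ * ζ₂ + ζ₂ ^ 2)‖ ≤ 3 := by
    rw [norm_mul, ← one_mul 3]
    exact mul_le_mul (norm_mul_le_one h₁ h₂) (norm_sq_add_mul_add_sq_le_three h₁ h₂)
      (norm_nonneg _) zero_le_one
  linarith [neg_norm_le_re (ζ₁ * ζ₂ * (ζ₁ ^ 2 + ζ₁ * ζ₂ + ζ₂ ^ 2))]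

lemma re_mul_sq_add_mul_add_sq_ge (h₁ : ‖ζ₁‖ ≤ 1) (h₂ : ‖ζ₂‖ ≤ 1) :
    (ζ₁ * ζ₂).re - 2 - 3 * ‖ζ₁ * ζ₂ - 1‖ ≤ (ζ₁ * ζ₂ * (ζ₁ ^ 2 + ζ₁ * ζ₂ + ζ₂ ^ 2)).re := by
  set S := ζ₁ ^ 2 + ζ₁ * ζ₂ + ζ₂ ^ 2
  have hsplit : (ζ₁ * ζ₂ * S).re
      = (ζ₁ ^ 2).re + (ζ₁ * ζ₂).re + (ζ₂ ^ 2).re + ((ζ₁ * ζ₂ - 1) * S).re := by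
    simp only [← add_re]; congr 1; ring
  have e₁ : -1 ≤ (ζ₁ ^ 2).re := by
    linarith [neg_norm_le_re (ζ₁ ^ 2), norm_pow ζ₁ 2, pow_le_one₀ (n := 2) (norm_nonneg _) h₁]
  have e₂ : -1 ≤ (ζ₂ ^ 2).re := by
    linarith [neg_norm_le_re (ζ₂ ^ 2), norm_pow ζ₂ 2, pow_le_one₀ (n := 2) (norm_nonneg _) h₂]
  have e₃ : -(3 * ‖ζ₁ * ζ₂ - 1‖) ≤ ((ζ₁ * ζ₂ - 1) * S).re := by
    have := neg_norm_le_re ((ζ₁ * ζ₂ - 1) * S)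
    rw [norm_mul] at this
    nlinarith [norm_sq_add_mul_add_sq_le_three h₁ h₂, norm_nonneg (ζ₁ * ζ₂ - 1)]
  linarith

end UnitDisk

lemma false_of_normalized_collision {p x R η : ℝ} (hp : 0 < p) (hp' : p < 1 / 40) (hx : x ≤ 1)
    (hR₃ : -3 ≤ R) (hRη : x - 2 - 3 * η ≤ R) (hη : 0 ≤ η) (hη₂ : η ^ 2 ≤ 2 - 2 * x)
    (h : 1 + 6 * p = x - 2 * p * (1 + 6 * p) * R) : False := by
  set k := 2 * p * (1 + 6 * p)
  have hk₀ : 0 ≤ k := by positivity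
  have hk₁ : k ≤ 1 := by nlinarith
  have hx₀ : 1 - 36 * p ^ 2 ≤ x := by nlinarith
  have hη₀ : η ≤ 9 * p := by nlinarith
  have hR : x - 2 - 27 * p ≤ R := by linarith
  have : 1 + 6 * p ≤ 1 + k * (1 + 27 * p) :=
    calc 1 + 6 * p ≤ x - k * (x - 2 - 27 * p) := by rw [h]; gcongr
      _ = (1 - k) * x + k * (2 + 27 * p) := by ring
      _ ≤ (1 - k) * 1 + k * (2 + 27 * p) := by gcongr
      _ = 1 + k * (1 + 27 * p) := by ring
  nlinarith

lemma normalizedMap_sub (p : ℝ) {ζ₁ ζ₂ : ℂ} (h₁ : ζ₁ ≠ 0) (h₂ : ζ₂ ≠ 0) :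
    normalizedMap p ζ₁ - normalizedMap p ζ₂ = (ζ₁ - ζ₂) / (ζ₁ * ζ₂) *
      (ζ₁ * ζ₂ - 2 * p * (1 + 6 * p) * (ζ₁ * ζ₂ * (ζ₁ ^ 2 + ζ₁ * ζ₂ + ζ₂ ^ 2)) - (1 + 6 * p)) := by
  unfold normalizedMap
  field_simp
  ring

theorem injOn_normalizedMap {p : ℝ} (hp : 0 < p) (hp' : p < 1 / 40) :
    Set.InjOn (normalizedMap p) {ζ | ζ ≠ 0 ∧ ‖ζ‖ ≤ 1} := by
  rintro ζ₁ ⟨h₁, h₁'⟩ ζ₂ ⟨h₂, h₂'⟩ heq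
  by_contra hne
  set w := ζ₁ * ζ₂
  set S := ζ₁ ^ 2 + ζ₁ * ζ₂ + ζ₂ ^ 2
  have hcol : ((1 + 6 * p : ℝ) : ℂ) = w - ((2 * p * (1 + 6 * p) : ℝ) : ℂ) * (w * S) := by
    have h := normalizedMap_sub p h₁ h₂
    rw [heq, sub_self, eq_comm] at h
    push_cast
    linear_combination -(mul_eq_zero.mp h).resolve_left
      (div_ne_zero (sub_ne_zero.mpr hne) (mul_ne_zero h₁ h₂))
  have hw : ‖w‖ ≤ 1 := norm_mul_le_one h₁' h₂'
  refine false_of_normalized_collision hp hp' ((re_le_norm w).trans hw)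
    (neg_three_le_re_mul_sq_add_mul_add_sq h₁' h₂') (re_mul_sq_add_mul_add_sq_ge h₁' h₂')
    (norm_nonneg _) (norm_sub_one_sq_le hw) ?_
  simpa only [sub_re, re_ofReal_mul, ofReal_re] using congrArg re hcol

/-- Let `β > 0`. There exists `A₀ > 0` such that for every `0 < A < A₀` the function
`f(ζ) = A ζ⁻¹ + (A/(1 + 6βA²)) ζ − 2βA³ ζ³` is injective on the punctured open unit
disk `{ζ : 0 < |ζ| < 1}`. This `f` is the conformal map from the unit disk to the
exterior of a bubble whose gravity potential near the contraction point is
`y²/2 + β Re(z⁴)/4`. -/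
theorem univalent_conformal_map_small_A (β : ℝ) (hβ : 0 < β) :
    ∃ A₀ : ℝ, 0 < A₀ ∧ ∀ A : ℝ, 0 < A → A < A₀ →
      Set.InjOn
        (fun ζ : ℂ => (A : ℂ) * ζ⁻¹ + ((A : ℂ) / (1 + 6 * (β : ℂ) * (A : ℂ) ^ 2)) * ζ
          - 2 * (β : ℂ) * (A : ℂ) ^ 3 * ζ ^ 3)
        {ζ : ℂ | 0 < ‖ζ‖ ∧ ‖ζ‖ < 1} := by
  refine ⟨√(1 / (40 * β)), by positivity, fun A hA hA₀ => ?_⟩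
  have hp : β * A ^ 2 < 1 / 40 := by
    have := (Real.lt_sqrt hA.le).mp hA₀
    rw [lt_div_iff₀ (by positivity)] at this
    linarith
  set D : ℂ := 1 + 6 * (β : ℂ) * (A : ℂ) ^ 2
  have hD : D ≠ 0 := by
    simp only [D]
    exact_mod_cast (by positivity : 1 + 6 * β * A ^ 2 ≠ 0)
  have hf : (fun ζ : ℂ => (A : ℂ) * ζ⁻¹ + ((A : ℂ) / D) * ζ - 2 * (β : ℂ) * (A : ℂ) ^ 3 * ζ ^ 3)
      = ((A / D : ℂ) * ·) ∘ normalizedMap (β * A ^ 2) := by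
    funext ζ
    simp only [Function.comp_apply, normalizedMap]
    push_cast
    linear_combination (ζ⁻¹ - 2 * β * A ^ 2 * ζ ^ 3) * (div_mul_cancel₀ (A : ℂ) hD).symm
  rw [hf]
  refine (mul_right_injective₀ (div_ne_zero (by exact_mod_cast hA.ne') hD)).comp_injOn
    ((injOn_normalizedMap (by positivity) hp).mono ?_)
  rintro ζ ⟨hζ₀, hζ₁⟩
  exact ⟨norm_pos_iff.mp hζ₀, hζ₁.le⟩
end
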